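/- Equivalence of characterisations of distributions of finite order: for a distribution f ∈ 𝒟'(ℝ^d) and r ∈ ℕ₀, the following are equivalent: (i) for every compact K ⊂ ℝ^d there is c_K < ∞ with |f(φ)| ≤ c_K ‖φ‖_{C^r} for all test functions φ supported in K; (ii) for every z ∈ ℝ^d and every λ̄ ∈ [1,∞), sup over φ ∈ 𝓑^r and λ ∈ [1,λ̄] of |f(φ_z^λ)| is finite; (iii) there exists z ∈ ℝ^d such that for every λ̄ ∈ ℕ, sup over φ ∈ 𝓑^r of |f(φ_z^{λ̄})| is finite. -/

import Mathlib

open MeasureTheory Metric Filter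
open scoped Classical Pointwise Topology

noncomputable section

/-- Euclidean space `ℝ^d`. -/
abbrev Ed (d : ℕ) := EuclideanSpace ℝ (Fin d)

/-- Multi-indices `k ∈ ℕ₀^d`. -/
abbrev MIdx (d : ℕ) := Fin d → ℕ

variable {d : ℕ}

/-- Degree `|k|` of a multi-index. -/
def mdeg (k : MIdx d) : ℕ := ∑ i, k i

/-- Factorial `k!` of a multi-index. -/
def mfact (k : MIdx d) : ℕ := ∏ i, Nat.factorial (k i)

/-- Monomial `v^k`. -/
def mpow (v : Ed d) (k : MIdx d) : ℝ := ∏ i, (v i) ^ (k i)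

/-- Partial (line) derivative in coordinate `i`. -/
def pd (i : Fin d) (f : Ed d → ℝ) : Ed d → ℝ :=
  fun x => lineDeriv ℝ f x (EuclideanSpace.single i (1:ℝ))

/-- Iterated partial derivative `∂^k`. -/
def mderiv (k : MIdx d) (f : Ed d → ℝ) : Ed d → ℝ :=
  (List.finRange d).foldr (fun i g => (pd i)^[k i] g) f

/-- Smooth compactly supported test function. -/
def IsTest (φ : Ed d → ℝ) : Prop := ContDiff ℝ (⊤ : ℕ∞) φ ∧ HasCompactSupport φ

/-- The `C^r` norm `max_{|k| ≤ r} ‖∂^k φ‖_∞`. -/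
def crNorm (r : ℕ) (φ : Ed d → ℝ) : ℝ :=
  ⨆ k : {k : MIdx d // mdeg k ≤ r}, ⨆ x : Ed d, |mderiv k.1 φ x|

/-- Generalized functions: arbitrary functionals on functions on `ℝ^d`. -/
abbrev DFunc (d : ℕ) := (Ed d → ℝ) → ℝ

/-- `f` is a distribution in `𝒟'(ℝ^d)`: linear on test functions and,
on every compact, bounded by some `C^r` norm. -/
def IsDistribution (f : DFunc d) : Prop :=
  (∀ φ ψ : Ed d → ℝ, IsTest φ → IsTest ψ → f (φ + ψ) = f φ + f ψ) ∧
  (∀ (c : ℝ) (φ : Ed d → ℝ), IsTest φ → f (c • φ) = c * f φ) ∧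
  (∀ K : Set (Ed d), IsCompact K → ∃ (r : ℕ) (C : ℝ),
    ∀ φ : Ed d → ℝ, IsTest φ → tsupport φ ⊆ K → |f φ| ≤ C * crNorm r φ)

/-- `f` is a distribution of order `r` (bound by the `C^r` norm on every compact). -/
def DistOrder (f : DFunc d) (r : ℕ) : Prop :=
  ∀ K : Set (Ed d), IsCompact K → ∃ C : ℝ,
    ∀ φ : Ed d → ℝ, IsTest φ → tsupport φ ⊆ K → |f φ| ≤ C * crNorm r φ

/-- `φ` is of class `C^r`: all iterated coordinate-partials up to order `r`
exist and are continuous. -/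
def IsCr (r : ℕ) (φ : Ed d → ℝ) : Prop :=
  ∀ k : MIdx d, mdeg k ≤ r →
    Continuous (mderiv k φ) ∧
    (mdeg k < r → ∀ (i : Fin d) (x : Ed d),
      LineDifferentiableAt ℝ (mderiv k φ) x (EuclideanSpace.single i (1:ℝ)))

/-- The functional `f` acts canonically (linearly, with local order-`r` bounds) on all
compactly supported `C^r` functions; i.e. `f` incorporates the canonical extension of a
distribution of order `r`. -/
def OrderExt (f : DFunc d) (r : ℕ) : Prop :=
  (∀ φ ψ : Ed d → ℝ, IsCr r φ → HasCompactSupport φ → IsCr r ψ → HasCompactSupport ψ →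
      f (φ + ψ) = f φ + f ψ) ∧
  (∀ (c : ℝ) (φ : Ed d → ℝ), IsCr r φ → HasCompactSupport φ → f (c • φ) = c * f φ) ∧
  (∀ K : Set (Ed d), IsCompact K → ∃ C : ℝ,
    ∀ φ : Ed d → ℝ, IsCr r φ → HasCompactSupport φ → tsupport φ ⊆ K → |f φ| ≤ C * crNorm r φ)

/-- The scaled recentred test function `φ_x^λ(y) = λ^{-d} φ(λ^{-1}(y-x))`. -/
def scTF (φ : Ed d → ℝ) (x : Ed d) (l : ℝ) : Ed d → ℝ :=
  fun y => (l ^ d)⁻¹ * φ (l⁻¹ • (y - x))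

/-- The class `𝓑^r` of smooth test functions supported in the closed unit ball with
all derivatives of order `≤ r` bounded by one. -/
def TB (d r : ℕ) : Set (Ed d → ℝ) :=
  {φ | IsTest φ ∧ tsupport φ ⊆ closedBall (0 : Ed d) 1 ∧
    ∀ k : MIdx d, mdeg k ≤ r → ∀ x, |mderiv k φ x| ≤ 1}

/-- The class `𝓑_γ` of smooth test functions supported in the closed unit ball which
annihilate all monomials of degree `≤ γ`. -/
def TAnn (d : ℕ) (γ : ℝ) : Set (Ed d → ℝ) :=
  {φ | IsTest φ ∧ tsupport φ ⊆ closedBall (0 : Ed d) 1 ∧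
    ∀ k : MIdx d, (mdeg k : ℝ) ≤ γ → (∫ z, φ z * mpow z k) = 0}

/-- The class `𝓑^r_γ = 𝓑^r ∩ 𝓑_γ`. -/
def TBAnn (d r : ℕ) (γ : ℝ) : Set (Ed d → ℝ) := TB d r ∩ TAnn d γ

/-- A germ: a family of functionals indexed by base points. -/
abbrev GermF (d : ℕ) := Ed d → DFunc d

/-- A germ of distributions, measurable in the base point. -/
def IsGerm (F : GermF d) : Prop :=
  (∀ x, IsDistribution (F x)) ∧ ∀ φ : Ed d → ℝ, IsTest φ → Measurable (fun x => F x φ)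

/-- Homogeneity bound with constant `C`: `|F_x(φ_x^λ)| ≤ C λ^ᾱ` on `(K, λ̄)` at order `r`. -/
def HomB (F : GermF d) (a : ℝ) (r : ℕ) (K : Set (Ed d)) (lb C : ℝ) : Prop :=
  ∀ x ∈ K, ∀ l : ℝ, 0 < l → l ≤ lb → ∀ φ ∈ TB d r, |F x (scTF φ x l)| ≤ C * l ^ a

/-- Coherence bound with constant `C`:
`|(F_y - F_x)(φ_x^λ)| ≤ C λ^α (|y-x|+λ)^{γ-α}` on `(K, λ̄)` at order `r`. -/
def CohB (F : GermF d) (a g : ℝ) (r : ℕ) (K : Set (Ed d)) (lb C : ℝ) : Prop :=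
  ∀ x ∈ K, ∀ y ∈ K, ∀ l : ℝ, 0 < l → l ≤ lb → ∀ φ ∈ TB d r,
    |F y (scTF φ x l) - F x (scTF φ x l)| ≤ C * l ^ a * (dist y x + l) ^ (g - a)

/-- `F` is `ᾱ`-homogeneous of order `r`. -/
def Homog (F : GermF d) (a : ℝ) (r : ℕ) : Prop :=
  ∀ K : Set (Ed d), IsCompact K → ∀ lb : ℝ, 1 ≤ lb → ∃ C, HomB F a r K lb C

/-- `F` is `(α, γ)`-coherent of order `r`. -/
def Coh (F : GermF d) (a g : ℝ) (r : ℕ) : Prop :=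
  ∀ K : Set (Ed d), IsCompact K → ∀ lb : ℝ, 1 ≤ lb → ∃ C, CohB F a g r K lb C

/-- Weak homogeneity bound with constant `C` (test functions annihilating polynomials
at small scales, plus a scale-one bound on all of `𝓑^r`). -/
def WHomB (F : GermF d) (a : ℝ) (r : ℕ) (K : Set (Ed d)) (lb C : ℝ) : Prop :=
  (∀ x ∈ K, ∀ l : ℝ, 0 < l → l ≤ lb → ∀ φ ∈ TBAnn d r a,
      |F x (scTF φ x l)| ≤ C * l ^ a) ∧
  (∀ x ∈ K, ∀ ψ ∈ TB d r, |F x (scTF ψ x 1)| ≤ C)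

/-- Weak coherence bound with constant `C`. -/
def WCohB (F : GermF d) (a g : ℝ) (r : ℕ) (K : Set (Ed d)) (lb C : ℝ) : Prop :=
  (∀ x ∈ K, ∀ y ∈ K, ∀ l : ℝ, 0 < l → l ≤ lb → ∀ φ ∈ TBAnn d r g,
      |F y (scTF φ x l) - F x (scTF φ x l)| ≤ C * l ^ a * (dist y x + l) ^ (g - a)) ∧
  (∀ x ∈ K, ∀ y ∈ K, ∀ ψ ∈ TB d r, |F y (scTF ψ x 1) - F x (scTF ψ x 1)| ≤ C)

/-- `F` is weakly `ᾱ`-homogeneous of order `r`. -/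
def WHomog (F : GermF d) (a : ℝ) (r : ℕ) : Prop :=
  ∀ K : Set (Ed d), IsCompact K → ∀ lb : ℝ, 1 ≤ lb → ∃ C, WHomB F a r K lb C

/-- `F` is weakly `(α,γ)`-coherent of order `r`. -/
def WCoh (F : GermF d) (a g : ℝ) (r : ℕ) : Prop :=
  ∀ K : Set (Ed d), IsCompact K → ∀ lb : ℝ, 1 ≤ lb → ∃ C, WCohB F a g r K lb C

/-- The canonical order `r_{ᾱ,α} = min{n ∈ ℕ₀ : n > max(-ᾱ, -α)}`. -/
def rJ (a b : ℝ) : ℕ := (⌊max (-a) (-b)⌋ + 1).toNat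

/-- Joint homogeneity-and-coherence bound at the canonical order. -/
def JointB (F : GermF d) (ab a g : ℝ) (K : Set (Ed d)) (lb C : ℝ) : Prop :=
  HomB F ab (rJ ab a) K lb C ∧ CohB F a g (rJ ab a) K lb C

/-- Joint weak homogeneity-and-coherence bound at the canonical order. -/
def WJointB (F : GermF d) (ab a g : ℝ) (K : Set (Ed d)) (lb C : ℝ) : Prop :=
  WHomB F ab (rJ ab a) K lb C ∧ WCohB F a g (rJ ab a) K lb C

/-- `R` is a `γ`-reconstruction of the `(α,γ)`-coherent germ `F`. -/
def IsRec (F : GermF d) (R : DFunc d) (a g : ℝ) : Prop :=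
  ∀ r : ℕ, -a < (r : ℝ) → ∀ K : Set (Ed d), IsCompact K → ∃ C : ℝ,
    ∀ x ∈ K, ∀ l : ℝ, 0 < l → l ≤ 1 → ∀ φ ∈ TB d r,
      |F x (scTF φ x l) - R (scTF φ x l)| ≤ C * l ^ g

/-- Mixed partial derivative `∂_1^k ∂_2^l K(x,y)` of a kernel. -/
def mixDeriv (k l : MIdx d) (Kf : Ed d → Ed d → ℝ) (x y : Ed d) : ℝ :=
  mderiv k (fun x' => mderiv l (fun y' => Kf x' y') y) x

/-- The kernel `K(x,y)` is of class `C^{m,r}` (mixed partials `∂_1^k ∂_2^l`, `|k| ≤ m`,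
`|l| ≤ r`, exist and are continuous). -/
def IsCmr (m r : ℕ) (Kf : Ed d → Ed d → ℝ) : Prop :=
  ∀ k l : MIdx d, mdeg k ≤ m → mdeg l ≤ r →
    Continuous (fun p : Ed d × Ed d => mixDeriv k l Kf p.1 p.2) ∧
    (mdeg k < m → ∀ (i : Fin d) (x y : Ed d),
      LineDifferentiableAt ℝ (fun x' => mixDeriv k l Kf x' y) x
        (EuclideanSpace.single i (1:ℝ))) ∧
    (mdeg l < r → ∀ (j : Fin d) (x y : Ed d),
      LineDifferentiableAt ℝ (mderiv l (fun y' => Kf x y')) y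
        (EuclideanSpace.single j (1:ℝ)))

/-- `Kn` is the dyadic decomposition of a `β`-regularising kernel of order `(m,r)`
with range `ρ` (Definition 2.3 of the paper). -/
def RegKer (d : ℕ) (β : ℝ) (m r : ℕ) (ρ : ℝ) (Kn : ℕ → Ed d → Ed d → ℝ) : Prop :=
  (∀ n, IsCmr m r (Kn n)) ∧
  (∀ n x y, Kn n x y ≠ 0 → dist x y ≤ ρ * 2 ^ (-(n : ℝ))) ∧
  (∀ K : Set (Ed d), IsCompact K → ∃ c : ℝ, 0 < c ∧
    (∀ n, ∀ k l : MIdx d, mdeg k ≤ m → mdeg l ≤ r → ∀ x ∈ K, ∀ y ∈ K,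
      |mixDeriv k l (Kn n) x y| ≤
        c * 2 ^ ((((d : ℝ) - β + (mdeg l : ℝ) + (mdeg k : ℝ))) * n)) ∧
    (∀ n, ∀ k l : MIdx d, mdeg k ≤ r → mdeg l ≤ r → ∀ y ∈ K,
      |∫ x, mpow (y - x) l * mderiv k (fun y' => Kn n x y') y| ≤ c * 2 ^ (-(β * (n : ℝ)))))

/-- `K_n^* ψ (y) = ∫ ψ(x) K_n(x,y) dx`. -/
def kstar (Kf : Ed d → Ed d → ℝ) (ψ : Ed d → ℝ) : Ed d → ℝ :=
  fun y => ∫ x, ψ x * Kf x y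

/-- `g = 𝖪 f`, i.e. `g(ψ) = Σ_n f(K_n^* ψ)` (with convergence) on test functions. -/
def KInt (Kn : ℕ → Ed d → Ed d → ℝ) (f g : DFunc d) : Prop :=
  ∀ ψ : Ed d → ℝ, IsTest ψ → HasSum (fun n => f (kstar (Kn n) ψ)) (g ψ)

/-- The kernel decomposition preserves polynomials at level `γ`. -/
def PresPoly (Kn : ℕ → Ed d → Ed d → ℝ) (γ : ℝ) : Prop :=
  ∀ n, ∀ k : MIdx d, (mdeg k : ℝ) ≤ γ →
    ∃ p : MvPolynomial (Fin d) ℝ, p.totalDegree ≤ mdeg k ∧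
      ∀ x : Ed d, (∫ y, Kn n x y * mpow y k) = MvPolynomial.eval (fun i => x i) p

/-- Distributional derivative `D^k f (φ) = (-1)^{|k|} f(∂^k φ)`. -/
def distDeriv (k : MIdx d) (f : DFunc d) : DFunc d :=
  fun φ => (-1 : ℝ) ^ (mdeg k) * f (mderiv k φ)

/-- `η ∈ 𝒟` with `∫ η = 1` and vanishing moments of orders `1 ≤ |l| < δ`. -/
def GoodEta (δ : ℝ) (η : Ed d → ℝ) : Prop :=
  IsTest η ∧ (∫ z, η z) = 1 ∧
    ∀ k : MIdx d, 1 ≤ mdeg k → (mdeg k : ℝ) < δ → (∫ z, η z * mpow z k) = 0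

/-- `v` is the pointwise derivative `D^k f(x)`, defined through the limit
`lim_{λ↓0} D^k f(η_x^λ)` for every admissible mollifier `η`. -/
def HasPtDeriv (f : DFunc d) (δ : ℝ) (k : MIdx d) (x : Ed d) (v : ℝ) : Prop :=
  ∀ η : Ed d → ℝ, GoodEta δ η →
    Tendsto (fun l : ℝ => distDeriv k f (scTF η x l)) (nhdsWithin 0 (Set.Ioi 0)) (nhds v)

/-- The Taylor polynomial `Σ_{|k| < δ} c_k (·-x)^k / k!`, viewed as the functional
`ψ ↦ Σ_{|k| < δ} c_k ∫ ψ(y) (y-x)^k / k! dy`. -/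
def taylorF (δ : ℝ) (c : MIdx d → ℝ) (x : Ed d) : DFunc d :=
  fun ψ => ∑ᶠ k ∈ {k : MIdx d | (mdeg k : ℝ) < δ},
    c k * ((∫ y, ψ y * mpow (y - x) k) / (mfact k))

/-- The smallest positive integer `> -γ` (used in Hölder–Zygmund spaces for `γ < 0`). -/
def rNeg (γ : ℝ) : ℕ := (⌊-γ + 1⌋).toNat

/-- The Hölder–Zygmund bound with constant `C` on the compact `K` (with `λ̄ = 1`). -/
def ZBound (γ : ℝ) (f : DFunc d) (K : Set (Ed d)) (C : ℝ) : Prop :=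
  (γ < 0 → ∀ x ∈ K, ∀ l : ℝ, 0 < l → l ≤ 1 → ∀ φ ∈ TB d (rNeg γ),
    |f (scTF φ x l)| ≤ C * l ^ γ) ∧
  (0 ≤ γ →
    (∀ x ∈ K, ∀ ψ ∈ TB d 0, |f (scTF ψ x 1)| ≤ C) ∧
    (∀ x ∈ K, ∀ l : ℝ, 0 < l → l ≤ 1 → ∀ φ ∈ TBAnn d 0 γ,
      |f (scTF φ x l)| ≤ C * l ^ γ))

/-- Membership in the local Hölder–Zygmund space `𝒵^γ`. -/
def MemZ (γ : ℝ) (f : DFunc d) : Prop :=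
  IsDistribution f ∧ ∀ K : Set (Ed d), IsCompact K → ∃ C, ZBound γ f K C

/-- `(Pg, Gg)` is a model with homogeneities `α` of order `rP`, with index set `S`. -/
def IsModelOn {ι : Type} (S : Finset ι) (Pg : ι → GermF d)
    (Gg : ι → ι → Ed d → Ed d → ℝ) (α : ι → ℝ) (rP : ℕ) : Prop :=
  (∀ i ∈ S, IsGerm (Pg i)) ∧
  (∀ i ∈ S, Homog (Pg i) (α i) rP) ∧
  (∀ i ∈ S, ∀ x y : Ed d, ∀ φ : Ed d → ℝ, IsTest φ →
    Pg i y φ = ∑ j ∈ S, Pg j x φ * Gg j i x y)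

/-- The modelled-distribution bound with constant `C` on the compact `K`. -/
def MDB {ι : Type} (S : Finset ι) (Gg : ι → ι → Ed d → Ed d → ℝ) (α : ι → ℝ)
    (γ : ℝ) (f : Ed d → ι → ℝ) (K : Set (Ed d)) (C : ℝ) : Prop :=
  (∀ x ∈ K, ∀ i ∈ S, |f x i| ≤ C) ∧
  (∀ x ∈ K, ∀ y ∈ K, ∀ i ∈ S,
    |(∑ j ∈ S, Gg i j x y * f y j) - f x i| ≤ C * (dist y x) ^ (γ - α i))

/-- `f` is a modelled distribution of order `γ` relative to the model data. -/
def IsMD {ι : Type} (S : Finset ι) (Gg : ι → ι → Ed d → Ed d → ℝ) (α : ι → ℝ)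
    (γ : ℝ) (f : Ed d → ι → ℝ) : Prop :=
  (∀ i ∈ S, Measurable fun x : Ed d => f x i) ∧
  ∀ K : Set (Ed d), IsCompact K → ∃ C, MDB S Gg α γ f K C

/-- The germ `⟨f, Π⟩_x = Σ_i f^i(x) Π^i_x`. -/
def germOf {ι : Type} (S : Finset ι) (Pg : ι → GermF d) (f : Ed d → ι → ℝ) : GermF d :=
  fun x φ => ∑ i ∈ S, f x i * Pg i x φ

/-!
For `λ ≥ 1` the rescaled function `φ_z^λ` of `φ ∈ 𝓑^r` is supported in `B(z, λ)` and each
derivative `∂^k φ_z^λ` carries the factor `λ^{-d-|k|} ≤ 1`, so a `C^r` bound on `B(z, λ̄)` bounds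
`f(φ_z^λ)` uniformly. Conversely, a test function `φ` supported in `B(z, n)` equals
`n^{d+r} ‖φ‖_{C^r} • ψ_z^n` for some `ψ ∈ 𝓑^r` (undo the rescaling and normalise), so by
linearity a bound on `f(ψ_z^n)` over `ψ ∈ 𝓑^r` at the single integer scale `n` is a `C^r` bound
on `B(z, n)`.
-/

lemma pd_affine (i : Fin d) (h : Ed d → ℝ) (c s : ℝ) (b x : Ed d) :
    pd i (fun y => c * h (s • y + b)) x = c * s * pd i h (s • x + b) := by
  have hline : (fun t : ℝ => c * h (s • (x + t • EuclideanSpace.single i (1:ℝ)) + b))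
      = fun t => c * h (s • x + b + (s * t) • EuclideanSpace.single i 1) := by
    funext t
    rw [smul_add, smul_smul, add_right_comm]
  have hscale := deriv_comp_mul_left (c := s)
    (f := fun u : ℝ => h (s • x + b + u • EuclideanSpace.single i 1)) (x := 0)
  simp only [pd, lineDeriv]
  rw [hline, deriv_const_mul_field, hscale, smul_eq_mul, mul_zero, mul_assoc]

lemma iterate_pd_affine (i : Fin d) (m : ℕ) (h : Ed d → ℝ) (c s : ℝ) (b : Ed d) :
    (pd i)^[m] (fun y => c * h (s • y + b)) = fun x => c * s ^ m * (pd i)^[m] h (s • x + b) := by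
  induction m generalizing h c with
  | zero => simp
  | succ m ih =>
    simp only [Function.iterate_succ_apply]
    rw [funext (pd_affine i h c s b), ih]
    funext x
    ring

lemma mderiv_affine (k : MIdx d) (h : Ed d → ℝ) (c s : ℝ) (b : Ed d) :
    mderiv k (fun y => c * h (s • y + b)) = fun x => c * s ^ mdeg k * mderiv k h (s • x + b) := by
  suffices ∀ L : List (Fin d), L.foldr (fun i g => (pd i)^[k i] g) (fun y => c * h (s • y + b))
      = fun x => c * s ^ (L.map k).sum * L.foldr (fun i g => (pd i)^[k i] g) h (s • x + b) by
    rw [mderiv, this, mdeg, Fin.sum_univ_def]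
    rfl
  intro L
  induction L with
  | nil => simp
  | cons i L ih =>
    simp only [List.foldr_cons, List.map_cons, List.sum_cons]
    rw [ih, iterate_pd_affine]
    funext x
    ring

lemma mderiv_zero_index (φ : Ed d → ℝ) : mderiv (fun _ => 0) φ = φ := by
  simp [mderiv]

lemma mderiv_zero (k : MIdx d) : mderiv k (0 : Ed d → ℝ) = 0 := by
  show mderiv k (fun _ => 0) = fun _ => 0
  simpa using mderiv_affine k (0 : Ed d → ℝ) 0 1 0

lemma pd_eq_fderiv {g : Ed d → ℝ} (hg : Differentiable ℝ g) (i : Fin d) :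
    pd i g = fun x => fderiv ℝ g x (EuclideanSpace.single i 1) :=
  funext fun x => (hg x).lineDeriv_eq_fderiv

lemma isTest_zero : IsTest (0 : Ed d → ℝ) :=
  ⟨contDiff_const, HasCompactSupport.zero⟩

lemma IsTest.pd {g : Ed d → ℝ} (hg : IsTest g) (i : Fin d) : IsTest (pd i g) := by
  rw [pd_eq_fderiv (hg.1.differentiable (by simp)) i]
  exact ⟨(contDiff_infty_iff_fderiv.mp hg.1).2.clm_apply contDiff_const, hg.2.fderiv_apply ℝ _⟩

lemma IsTest.mderiv {φ : Ed d → ℝ} (hφ : IsTest φ) (k : MIdx d) : IsTest (mderiv k φ) := by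
  unfold _root_.mderiv
  induction List.finRange d with
  | nil => exact hφ
  | cons i L ih => exact Function.Iterate.rec IsTest ih (fun g hg => hg.pd i) (k i)

lemma IsTest.affine {φ : Ed d → ℝ} (hφ : IsTest φ) (c : ℝ) {s : ℝ} (hs : s ≠ 0) (b : Ed d) :
    IsTest (fun y => c * φ (s • y + b)) :=
  ⟨contDiff_const.mul (hφ.1.comp (by fun_prop)),
    (hφ.2.comp_homeomorph ((Homeomorph.smulOfNeZero s hs).trans (Homeomorph.addRight b))).mul_left⟩

lemma tsupport_affine_subset (φ : Ed d → ℝ) (c s : ℝ) (b : Ed d) :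
    tsupport (fun y => c * φ (s • y + b)) ⊆ (fun y => s • y + b) ⁻¹' tsupport φ :=
  tsupport_mul_subset_right.trans (tsupport_comp_subset_preimage φ (by fun_prop))

lemma finite_mdeg_le (r : ℕ) : {k : MIdx d | mdeg k ≤ r}.Finite :=
  (Set.finite_Iic fun _ => r).subset fun k hk i =>
    (Finset.single_le_sum (fun j _ => Nat.zero_le (k j)) (Finset.mem_univ i)).trans hk

lemma crNorm_nonneg (r : ℕ) (φ : Ed d → ℝ) : 0 ≤ crNorm r φ :=
  Real.iSup_nonneg fun _ => Real.iSup_nonneg fun _ => abs_nonneg _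

lemma abs_mderiv_le_crNorm {r : ℕ} {φ : Ed d → ℝ} (hφ : IsTest φ) {k : MIdx d}
    (hk : mdeg k ≤ r) (x : Ed d) : |mderiv k φ x| ≤ crNorm r φ := by
  obtain ⟨C, hC⟩ := (hφ.mderiv k).1.continuous.bounded_above_of_compact_support (hφ.mderiv k).2
  have : Finite {k : MIdx d // mdeg k ≤ r} := (finite_mdeg_le r).to_subtype
  exact (le_ciSup ⟨C, by rintro _ ⟨y, rfl⟩; exact hC y⟩ x).trans
    (le_ciSup (f := fun k : {k : MIdx d // mdeg k ≤ r} => ⨆ x, |mderiv k.1 φ x|)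
      (Set.finite_range _).bddAbove ⟨k, hk⟩)

lemma crNorm_le {r : ℕ} {φ : Ed d → ℝ} {M : ℝ}
    (h : ∀ k : MIdx d, mdeg k ≤ r → ∀ x, |mderiv k φ x| ≤ M) : crNorm r φ ≤ M := by
  have : Nonempty {k : MIdx d // mdeg k ≤ r} := ⟨⟨0, by simp [mdeg]⟩⟩
  exact ciSup_le fun k => ciSup_le fun x => h k.1 k.2 x

lemma eq_zero_of_crNorm_eq_zero {r : ℕ} {φ : Ed d → ℝ} (hφ : IsTest φ) (h : crNorm r φ = 0) :
    φ = 0 := by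
  funext x
  have hx := abs_mderiv_le_crNorm (r := r) hφ (k := fun _ => 0) (by simp [mdeg]) x
  rw [mderiv_zero_index, h] at hx
  exact abs_nonpos_iff.mp hx

lemma zero_mem_TB (d r : ℕ) : (0 : Ed d → ℝ) ∈ TB d r :=
  ⟨isTest_zero, by simp, fun k _ x => by simp [mderiv_zero]⟩

lemma scTF_eq_affine (φ : Ed d → ℝ) (z : Ed d) (l : ℝ) :
    scTF φ z l = fun y => (l ^ d)⁻¹ * φ (l⁻¹ • y + -(l⁻¹ • z)) := by
  funext y
  simp only [scTF, sub_eq_add_neg, smul_add, smul_neg]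

lemma IsTest.scTF {φ : Ed d → ℝ} (hφ : IsTest φ) (z : Ed d) {l : ℝ} (hl : l ≠ 0) :
    IsTest (scTF φ z l) := by
  rw [scTF_eq_affine]
  exact hφ.affine _ (inv_ne_zero hl) _

lemma tsupport_scTF_subset_closedBall {φ : Ed d → ℝ} (hφ : tsupport φ ⊆ closedBall 0 1)
    (z : Ed d) {l : ℝ} (hl : 0 < l) : tsupport (scTF φ z l) ⊆ closedBall z l := by
  rw [scTF_eq_affine]
  intro y hy
  have hy1 : l⁻¹ • y + -(l⁻¹ • z) ∈ closedBall 0 1 := hφ (tsupport_affine_subset _ _ _ _ hy)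
  rw [mem_closedBall_zero_iff, ← sub_eq_add_neg, ← smul_sub, norm_smul, norm_inv,
    Real.norm_of_nonneg hl.le, inv_mul_le_iff₀ hl, mul_one] at hy1
  rwa [mem_closedBall, dist_eq_norm]

lemma mderiv_scTF (k : MIdx d) (φ : Ed d → ℝ) (z : Ed d) (l : ℝ) :
    mderiv k (scTF φ z l) = fun x => (l ^ d)⁻¹ * l⁻¹ ^ mdeg k * mderiv k φ (l⁻¹ • (x - z)) := by
  rw [scTF_eq_affine, mderiv_affine]
  simp only [sub_eq_add_neg, smul_add, smul_neg]

lemma crNorm_scTF_le_one {r : ℕ} {φ : Ed d → ℝ} (hφ : φ ∈ TB d r) (z : Ed d) {l : ℝ}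
    (hl : 1 ≤ l) : crNorm r (scTF φ z l) ≤ 1 := by
  have hl0 : 0 < l := one_pos.trans_le hl
  refine crNorm_le fun k hk x => ?_
  have hscale : (l ^ d)⁻¹ * l⁻¹ ^ mdeg k ≤ 1 := by
    rw [inv_pow, ← mul_inv, ← pow_add]
    exact inv_le_one_of_one_le₀ (one_le_pow₀ hl)
  rw [mderiv_scTF, abs_mul, abs_of_nonneg (by positivity)]
  exact mul_le_one₀ hscale (abs_nonneg _) (hφ.2.2 k hk _)

def LargeScaleBounded (f : DFunc d) (r : ℕ) : Prop :=
  ∀ z : Ed d, ∀ lb : ℝ, 1 ≤ lb → ∃ C : ℝ,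
    ∀ φ ∈ TB d r, ∀ l : ℝ, 1 ≤ l → l ≤ lb → |f (scTF φ z l)| ≤ C

def NatScaleBoundedAt (f : DFunc d) (r : ℕ) (z : Ed d) : Prop :=
  ∀ lb : ℕ, 1 ≤ lb → ∃ C : ℝ, ∀ φ ∈ TB d r, |f (scTF φ z (lb : ℝ))| ≤ C

lemma DistOrder.largeScaleBounded {f : DFunc d} {r : ℕ} (hf : DistOrder f r) :
    LargeScaleBounded f r := by
  intro z lb _
  obtain ⟨C, hC⟩ := hf (closedBall z lb) (isCompact_closedBall z lb)
  refine ⟨|C|, fun φ hφ l hl hlb => ?_⟩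
  have hl0 : 0 < l := one_pos.trans_le hl
  have hsupp : tsupport (scTF φ z l) ⊆ closedBall z lb :=
    (tsupport_scTF_subset_closedBall hφ.2.1 z hl0).trans (closedBall_subset_closedBall hlb)
  calc |f (scTF φ z l)| ≤ C * crNorm r (scTF φ z l) := hC _ (hφ.1.scTF z hl0.ne') hsupp
    _ ≤ |C| * 1 :=
      mul_le_mul (le_abs_self C) (crNorm_scTF_le_one hφ z hl) (crNorm_nonneg _ _) (abs_nonneg C)
    _ = |C| := mul_one _

lemma LargeScaleBounded.natScaleBoundedAt {f : DFunc d} {r : ℕ} (h : LargeScaleBounded f r)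
    (z : Ed d) : NatScaleBoundedAt f r z := by
  intro lb hlb
  have hlb' : (1 : ℝ) ≤ lb := by exact_mod_cast hlb
  obtain ⟨C, hC⟩ := h z lb hlb'
  exact ⟨C, fun φ hφ => hC φ hφ lb hlb' le_rfl⟩

lemma exists_mem_TB_smul_scTF_eq {φ : Ed d → ℝ} (hφ : IsTest φ) (r : ℕ) {z : Ed d} {n : ℝ}
    (hn : 1 ≤ n) (hsupp : tsupport φ ⊆ closedBall z n) :
    ∃ ψ ∈ TB d r, φ = (n ^ (d + r) * crNorm r φ) • scTF ψ z n := by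
  have hn0 : 0 < n := one_pos.trans_le hn
  rcases (crNorm_nonneg r φ).eq_or_lt with hN | hN
  · refine ⟨0, zero_mem_TB d r, ?_⟩
    rw [← hN, mul_zero, zero_smul]
    exact eq_zero_of_crNorm_eq_zero hφ hN.symm
  set M := n ^ (d + r) * crNorm r φ
  have hM : 0 < M := by positivity
  refine ⟨fun y => (M⁻¹ * n ^ d) * φ (n • y + z), ⟨hφ.affine _ hn0.ne' z, ?_, ?_⟩, ?_⟩
  · intro y hy
    have hy1 := hsupp (tsupport_affine_subset _ _ _ _ hy)
    rw [mem_closedBall, dist_eq_norm, add_sub_cancel_right, norm_smul,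
      Real.norm_of_nonneg hn0.le] at hy1
    rw [mem_closedBall_zero_iff]
    nlinarith
  · intro k hk x
    have hpow : n ^ d * n ^ mdeg k ≤ n ^ (d + r) := by
      rw [← pow_add]
      exact pow_le_pow_right₀ hn (by omega)
    rw [mderiv_affine, abs_mul, abs_of_nonneg (by positivity), mul_assoc M⁻¹, mul_assoc M⁻¹]
    calc M⁻¹ * (n ^ d * n ^ mdeg k * |mderiv k φ (n • x + z)|) ≤ M⁻¹ * M := by
          gcongr
          exact mul_le_mul hpow (abs_mderiv_le_crNorm hφ hk _) (abs_nonneg _) (by positivity)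
      _ = 1 := inv_mul_cancel₀ hM.ne'
  · funext y
    simp only [Pi.smul_apply, scTF, smul_eq_mul, smul_smul, mul_inv_cancel₀ hn0.ne', one_smul,
      sub_add_cancel]
    field_simp

lemma NatScaleBoundedAt.distOrder {f : DFunc d} {r : ℕ} {z : Ed d} (hf : IsDistribution f)
    (h : NatScaleBoundedAt f r z) : DistOrder f r := by
  intro K hK
  obtain ⟨R, hR⟩ := hK.isBounded.subset_closedBall z
  obtain ⟨n, hn⟩ := exists_nat_ge (max R 1)
  have hn1 : (1 : ℝ) ≤ n := (le_max_right R 1).trans hn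
  have hKn : K ⊆ closedBall z n :=
    hR.trans (closedBall_subset_closedBall ((le_max_left R 1).trans hn))
  obtain ⟨C, hC⟩ := h n (by exact_mod_cast hn1)
  refine ⟨C * n ^ (d + r), fun φ hφ hsupp => ?_⟩
  obtain ⟨ψ, hψ, hφψ⟩ := exists_mem_TB_smul_scTF_eq hφ r hn1 (hsupp.trans hKn)
  have hM : 0 ≤ (n : ℝ) ^ (d + r) * crNorm r φ := mul_nonneg (by positivity) (crNorm_nonneg r φ)
  calc |f φ| = n ^ (d + r) * crNorm r φ * |f (scTF ψ z n)| := by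
        conv_lhs => rw [hφψ]
        rw [hf.2.1 _ _ (hψ.1.scTF z (by positivity)), abs_mul, abs_of_nonneg hM]
    _ ≤ n ^ (d + r) * crNorm r φ * C := by gcongr; exact hC ψ hψ
    _ = C * n ^ (d + r) * crNorm r φ := by ring

theorem distribution_order_equivalences_general
    (d : ℕ) (f : DFunc d) (hf : IsDistribution f) (r : ℕ) :
    ((∀ K : Set (Ed d), IsCompact K → ∃ C : ℝ,
        ∀ φ : Ed d → ℝ, IsTest φ → tsupport φ ⊆ K → |f φ| ≤ C * crNorm r φ) ↔
      (∀ z : Ed d, ∀ lb : ℝ, 1 ≤ lb → ∃ C : ℝ,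
        ∀ φ ∈ TB d r, ∀ l : ℝ, 1 ≤ l → l ≤ lb → |f (scTF φ z l)| ≤ C)) ∧
    ((∀ z : Ed d, ∀ lb : ℝ, 1 ≤ lb → ∃ C : ℝ,
        ∀ φ ∈ TB d r, ∀ l : ℝ, 1 ≤ l → l ≤ lb → |f (scTF φ z l)| ≤ C) ↔
      (∃ z : Ed d, ∀ lb : ℕ, 1 ≤ lb → ∃ C : ℝ,
        ∀ φ ∈ TB d r, |f (scTF φ z (lb : ℝ))| ≤ C)) := by
  have h12 : DistOrder f r → LargeScaleBounded f r := DistOrder.largeScaleBounded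
  have h23 : LargeScaleBounded f r → ∃ z, NatScaleBoundedAt f r z :=
    fun h => ⟨0, h.natScaleBoundedAt 0⟩
  have h31 : (∃ z, NatScaleBoundedAt f r z) → DistOrder f r :=
    fun ⟨_, h⟩ => h.distOrder hf
  exact ⟨⟨h12, h31 ∘ h23⟩, ⟨h23, h12 ∘ h31⟩⟩

/-- Remark 2.2: equivalence of the characterisations of distributions of
finite order `r`:
(i) locally bounded by the `C^r` norm on every compact;
(ii) for every base point `z` and every `λ̄ ∈ [1,∞)`, `sup_{φ ∈ 𝓑^r, λ ∈ [1,λ̄]} |f(φ_z^λ)| < ∞`;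
(iii) for some base point `z`, for every integer `λ̄ ≥ 1`, `sup_{φ ∈ 𝓑^r} |f(φ_z^λ̄)| < ∞`. -/
theorem distribution_order_equivalences
    (d : ℕ) (hd : 0 < d) (f : DFunc d) (hf : IsDistribution f) (r : ℕ) :
    ((∀ K : Set (Ed d), IsCompact K → ∃ C : ℝ,
        ∀ φ : Ed d → ℝ, IsTest φ → tsupport φ ⊆ K → |f φ| ≤ C * crNorm r φ) ↔
      (∀ z : Ed d, ∀ lb : ℝ, 1 ≤ lb → ∃ C : ℝ,
        ∀ φ ∈ TB d r, ∀ l : ℝ, 1 ≤ l → l ≤ lb → |f (scTF φ z l)| ≤ C)) ∧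
    ((∀ z : Ed d, ∀ lb : ℝ, 1 ≤ lb → ∃ C : ℝ,
        ∀ φ ∈ TB d r, ∀ l : ℝ, 1 ≤ l → l ≤ lb → |f (scTF φ z l)| ≤ C) ↔
      (∃ z : Ed d, ∀ lb : ℕ, 1 ≤ lb → ∃ C : ℝ,
        ∀ φ ∈ TB d r, |f (scTF φ z (lb : ℝ))| ≤ C)) :=
  distribution_order_equivalences_general d f hf r
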